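/- arXiv:2603.21431 — 2 statements merged into one kernel-verified Lean document; each statement's English description precedes it below -/
import Mathlib

section
/- Let Γ be a group and n ≥ 1. Let d_0, …, d_{n-1} with d_m ∈ M_{k_{m+1}×k_m}(ℝΓ) satisfy d_{m+1} d_m = 0, and set d_m = 0 for all m ≥ n (the complex has length n, as for a group of geometric dimension ≤ n). Assume that for every degree 1 ≤ m ≤ n and every j ≥ 1: (left-exactness) every x ∈ M_{k_m×j}(ℝΓ) with d_{m-1}* x = 0 is of the form d_m* y, and (right-exactness) every x ∈ M_{j×k_m}(ℝΓ) with x d_{m-1} = 0 is of the form y d_m. Then for every integer i with 2i ≥ n + 1 we have ker D_{i-1} = SC_i; that is, every a ∈ M_{k_i}(ℝΓ) with d_{i-1}* a d_{i-1} = 0 can be written as a = d_i* x + y d_i for some x ∈ M_{k_{i+1}×k_i}(ℝΓ) and y ∈ M_{k_i×k_{i+1}}(ℝΓ). -/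
open scoped BigOperators
noncomputable section

universe u v w

/-- The star operation on the real group algebra, determined by `γ ↦ γ⁻¹`. -/
def rgStar {G : Type u} [Group G] (x : MonoidAlgebra ℝ G) : MonoidAlgebra ℝ G :=
  MonoidAlgebra.mapDomain (fun g : G => g⁻¹) x

/-- The adjoint of a matrix over the real group algebra:
transpose and apply `rgStar` entrywise. -/
def adjM {G : Type u} [Group G] {m n : Type*}
    (a : Matrix m n (MonoidAlgebra ℝ G)) : Matrix n m (MonoidAlgebra ℝ G) :=
  Matrix.of fun i j => rgStar (a j i)

/-- A square matrix over the real group algebra is a sum of hermitian squares. -/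
def IsSOS {G : Type u} [Group G] {p : Type*} [Fintype p]
    (x : Matrix p p (MonoidAlgebra ℝ G)) : Prop :=
  ∃ (m : ℕ) (a : Fin m → Matrix p p (MonoidAlgebra ℝ G)),
    x = ∑ i, adjM (a i) * a i

/-- A unitary representation of `G` on a real Hilbert space. -/
structure URep (G : Type u) [Group G] : Type (max u (v + 1)) where
  H : Type v
  [normed : NormedAddCommGroup H]
  [ips : InnerProductSpace ℝ H]
  [complete : CompleteSpace H]
  π : G →* (H →L[ℝ] H)
  isometric : ∀ (γ : G) (x : H), ‖π γ x‖ = ‖x‖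

attribute [instance] URep.normed URep.ips URep.complete

/-- The extension of a unitary representation to the real group algebra. -/
noncomputable def URep.alg {G : Type u} [Group G] (ρ : URep.{u, v} G) :
    MonoidAlgebra ℝ G →ₐ[ℝ] (ρ.H →L[ℝ] ρ.H) :=
  MonoidAlgebra.lift ℝ (ρ.H →L[ℝ] ρ.H) G ρ.π

/-- The entrywise application of a unitary representation to a matrix over the
real group algebra, acting on tuples of vectors. -/
noncomputable def URep.mat {G : Type u} [Group G] (ρ : URep.{u, v} G)
    {p q : Type*} [Fintype q] (a : Matrix p q (MonoidAlgebra ℝ G))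
    (z : q → ρ.H) : p → ρ.H :=
  fun i => ∑ j, ρ.alg (a i j) (z j)

/-- The inner product on a finite power of a real Hilbert space. -/
noncomputable def pInner {G : Type u} [Group G] (ρ : URep.{u, v} G)
    {p : Type*} [Fintype p] (x y : p → ρ.H) : ℝ :=
  ∑ i, inner ℝ (x i) (y i)

/-
In degree `i` with `2i ≥ n + 1`, use left exactness to push the relation `d_{i-1}* a d_{i-1} = 0`
one degree up on the left and one down on the right. After `n - i` steps the left codifferential
vanishes, so right exactness alone splits the last relation; the splittings are then carried back
down, each step costing one more application of right exactness.
-/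

lemma rgStar_add {G : Type u} [Group G] (x y : MonoidAlgebra ℝ G) :
    rgStar (x + y) = rgStar x + rgStar y :=
  MonoidAlgebra.mapDomain_add _ _ _

lemma rgStar_sum {G : Type u} [Group G] {ι : Type*} (s : Finset ι)
    (f : ι → MonoidAlgebra ℝ G) :
    rgStar (∑ i ∈ s, f i) = ∑ i ∈ s, rgStar (f i) :=
  map_sum (AddMonoidHom.mk' rgStar rgStar_add) f s

lemma rgStar_mul {G : Type u} [Group G] (x y : MonoidAlgebra ℝ G) :
    rgStar (x * y) = rgStar y * rgStar x := by
  induction x using MonoidAlgebra.induction_linear with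
  | zero => simp [rgStar]
  | add a b ha hb => rw [add_mul, rgStar_add, ha, hb, rgStar_add, mul_add]
  | single g r =>
    induction y using MonoidAlgebra.induction_linear with
    | zero => simp [rgStar]
    | add a b ha hb => rw [mul_add, rgStar_add, ha, hb, rgStar_add, add_mul]
    | single h s =>
      simp only [rgStar, MonoidAlgebra.single_mul_single, MonoidAlgebra.mapDomain_single,
        mul_inv_rev, mul_comm r s]

lemma adjM_zero {G : Type u} [Group G] {m n : Type*} :
    adjM (0 : Matrix m n (MonoidAlgebra ℝ G)) = 0 := by
  ext i j
  simp [adjM, rgStar]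

lemma adjM_mul {G : Type u} [Group G] {m n p : Type*} [Fintype n]
    (A : Matrix m n (MonoidAlgebra ℝ G)) (B : Matrix n p (MonoidAlgebra ℝ G)) :
    adjM (A * B) = adjM B * adjM A := by
  ext i j
  simp [adjM, Matrix.mul_apply, rgStar_sum, rgStar_mul]

section ZigZag

variable {R : Type*} [Ring R] {k l : ℕ → ℕ}

def LeftExactAt (e : ∀ m, Matrix (Fin (k m)) (Fin (k (m + 1))) R) (m : ℕ) : Prop :=
  ∀ (j : ℕ) (x : Matrix (Fin (k (m + 1))) (Fin j) R),
    e m * x = 0 → ∃ y : Matrix (Fin (k (m + 2))) (Fin j) R, x = e (m + 1) * y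

def RightExactAt (d : ∀ m, Matrix (Fin (l (m + 1))) (Fin (l m)) R) (m : ℕ) : Prop :=
  ∀ (j : ℕ) (x : Matrix (Fin j) (Fin (l (m + 1))) R),
    x * d m = 0 → ∃ y : Matrix (Fin j) (Fin (l (m + 2))) R, x = y * d (m + 1)

lemma leftExactAt_of_pos {e : ∀ m, Matrix (Fin (k m)) (Fin (k (m + 1))) R} {m : ℕ}
    (h : ∀ j : ℕ, 1 ≤ j → ∀ x : Matrix (Fin (k (m + 1))) (Fin j) R,
      e m * x = 0 → ∃ y : Matrix (Fin (k (m + 2))) (Fin j) R, x = e (m + 1) * y) :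
    LeftExactAt e m := by
  intro j x hx
  rcases Nat.eq_zero_or_pos j with rfl | hj
  · exact ⟨0, Subsingleton.elim _ _⟩
  · exact h j hj x hx

lemma rightExactAt_of_pos {d : ∀ m, Matrix (Fin (l (m + 1))) (Fin (l m)) R} {m : ℕ}
    (h : ∀ j : ℕ, 1 ≤ j → ∀ x : Matrix (Fin j) (Fin (l (m + 1))) R,
      x * d m = 0 → ∃ y : Matrix (Fin j) (Fin (l (m + 2))) R, x = y * d (m + 1)) :
    RightExactAt d m := by
  intro j x hx
  rcases Nat.eq_zero_or_pos j with rfl | hj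
  · exact ⟨0, Subsingleton.elim _ _⟩
  · exact h j hj x hx

theorem exists_eq_add_of_mul_mul_eq_zero (n : ℕ)
    (e : ∀ m, Matrix (Fin (k m)) (Fin (k (m + 1))) R)
    (d : ∀ m, Matrix (Fin (l (m + 1))) (Fin (l m)) R)
    (hee : ∀ m, e m * e (m + 1) = 0) (hdd : ∀ m, d (m + 1) * d m = 0) (hen : e n = 0)
    (hexL : ∀ m < n, LeftExactAt e m) (hexR : ∀ m < n, RightExactAt d m)
    {p q : ℕ} (hp : p < n) (hq : q < n) (hpq : n ≤ p + q + 1)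
    (b : Matrix (Fin (k (p + 1))) (Fin (l (q + 1))) R) (hb : e p * b * d q = 0) :
    ∃ (u : Matrix (Fin (k (p + 2))) (Fin (l (q + 1))) R)
      (v : Matrix (Fin (k (p + 1))) (Fin (l (q + 2))) R),
      b = e (p + 1) * u + v * d (q + 1) := by
  obtain ⟨s, hs⟩ : ∃ s, p + s + 1 = n := ⟨n - p - 1, by omega⟩
  induction s generalizing p q with
  | zero =>
    obtain ⟨c, hc⟩ := hexL p hp _ (b * d q) (by rwa [← Matrix.mul_assoc])
    have he : e (p + 1) = 0 := by subst hs; exact hen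
    rw [he, Matrix.zero_mul] at hc
    obtain ⟨v, hv⟩ := hexR q hq _ b hc
    exact ⟨0, v, by rwa [Matrix.mul_zero, zero_add]⟩
  | succ s ih =>
    obtain ⟨q, rfl⟩ : ∃ q', q = q' + 1 := ⟨q - 1, by omega⟩
    obtain ⟨c, hc⟩ := hexL p hp _ (b * d (q + 1)) (by rwa [← Matrix.mul_assoc])
    have hc' : e (p + 1) * c * d q = 0 := by
      rw [← hc, Matrix.mul_assoc, hdd, Matrix.mul_zero]
    obtain ⟨u, v, huv⟩ := ih (by omega) (by omega) (by omega) c hc' (by omega)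
    have hbv : (b - e (p + 1) * v) * d (q + 1) = 0 := by
      rw [Matrix.sub_mul, hc, huv, Matrix.mul_add, ← Matrix.mul_assoc, ← Matrix.mul_assoc,
        hee, Matrix.zero_mul, zero_add, Matrix.mul_assoc, sub_self]
    obtain ⟨y, hy⟩ := hexR (q + 1) hq _ _ hbv
    exact ⟨v, y, by rw [← hy]; abel⟩

end ZigZag

theorem stmt_6_general {G : Type u} [Group G] (n : ℕ) (k : ℕ → ℕ)
    (d : ∀ m : ℕ, Matrix (Fin (k (m + 1))) (Fin (k m)) (MonoidAlgebra ℝ G))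
    (hdd : ∀ m : ℕ, d (m + 1) * d m = 0)
    (hktop : ∀ m : ℕ, n < m → k m = 0)
    (hdtop : ∀ m : ℕ, n ≤ m → d m = 0)
    (hexL : ∀ m : ℕ, m < n → ∀ j : ℕ, 1 ≤ j →
      ∀ x : Matrix (Fin (k (m + 1))) (Fin j) (MonoidAlgebra ℝ G),
        adjM (d m) * x = 0 →
        ∃ y : Matrix (Fin (k (m + 2))) (Fin j) (MonoidAlgebra ℝ G),
          x = adjM (d (m + 1)) * y)
    (hexR : ∀ m : ℕ, m < n → ∀ j : ℕ, 1 ≤ j →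
      ∀ x : Matrix (Fin j) (Fin (k (m + 1))) (MonoidAlgebra ℝ G),
        x * d m = 0 →
        ∃ y : Matrix (Fin j) (Fin (k (m + 2))) (MonoidAlgebra ℝ G),
          x = y * d (m + 1)) :
    ∀ i0 : ℕ, n + 1 ≤ 2 * (i0 + 1) →
      ∀ a : Matrix (Fin (k (i0 + 1))) (Fin (k (i0 + 1))) (MonoidAlgebra ℝ G),
        adjM (d i0) * a * d i0 = 0 →
        ∃ (x : Matrix (Fin (k (i0 + 2))) (Fin (k (i0 + 1))) (MonoidAlgebra ℝ G))
          (y : Matrix (Fin (k (i0 + 1))) (Fin (k (i0 + 2))) (MonoidAlgebra ℝ G)),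
          a = adjM (d (i0 + 1)) * x + y * d (i0 + 1) := by
  intro i0 hi a ha
  by_cases hin : i0 < n
  · have hadd : ∀ m, adjM (d m) * adjM (d (m + 1)) = 0 := fun m => by
      rw [← adjM_mul, hdd, adjM_zero]
    exact exists_eq_add_of_mul_mul_eq_zero n (fun m => adjM (d m)) d hadd hdd
      (by rw [hdtop n le_rfl, adjM_zero]) (fun m hm => leftExactAt_of_pos (hexL m hm))
      (fun m hm => rightExactAt_of_pos (hexR m hm)) hin hin (by omega) a ha
  · have : IsEmpty (Fin (k (i0 + 1))) := by rw [hktop _ (by omega)]; infer_instance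
    exact ⟨0, 0, Subsingleton.elim _ _⟩

/-- for an acyclic complex of length `n` (as for a group of type `F`
of geometric dimension `≤ n`, so that there are no cells — and the codifferentials
vanish — above degree `n`), in every degree `i` with `2i ≥ n + 1` we have
`ker D_{i-1} = SC_i`: every `a` with `d_{i-1}* a d_{i-1} = 0` can be written as
`a = d_i* x + y d_i`.  (Here the degree `i` is written as `i0 + 1`.) -/
theorem stmt_6 {G : Type u} [Group G] (n : ℕ) (hn : 1 ≤ n) (k : ℕ → ℕ)
    (d : ∀ m : ℕ, Matrix (Fin (k (m + 1))) (Fin (k m)) (MonoidAlgebra ℝ G))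
    (hdd : ∀ m : ℕ, d (m + 1) * d m = 0)
    (hktop : ∀ m : ℕ, n < m → k m = 0)
    (hdtop : ∀ m : ℕ, n ≤ m → d m = 0)
    (hexL : ∀ m : ℕ, m < n → ∀ j : ℕ, 1 ≤ j →
      ∀ x : Matrix (Fin (k (m + 1))) (Fin j) (MonoidAlgebra ℝ G),
        adjM (d m) * x = 0 →
        ∃ y : Matrix (Fin (k (m + 2))) (Fin j) (MonoidAlgebra ℝ G),
          x = adjM (d (m + 1)) * y)
    (hexR : ∀ m : ℕ, m < n → ∀ j : ℕ, 1 ≤ j →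
      ∀ x : Matrix (Fin j) (Fin (k (m + 1))) (MonoidAlgebra ℝ G),
        x * d m = 0 →
        ∃ y : Matrix (Fin j) (Fin (k (m + 2))) (MonoidAlgebra ℝ G),
          x = y * d (m + 1)) :
    ∀ i0 : ℕ, n + 1 ≤ 2 * (i0 + 1) →
      ∀ a : Matrix (Fin (k (i0 + 1))) (Fin (k (i0 + 1))) (MonoidAlgebra ℝ G),
        adjM (d i0) * a * d i0 = 0 →
        ∃ (x : Matrix (Fin (k (i0 + 2))) (Fin (k (i0 + 1))) (MonoidAlgebra ℝ G))
          (y : Matrix (Fin (k (i0 + 1))) (Fin (k (i0 + 2))) (MonoidAlgebra ℝ G)),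
          a = adjM (d (i0 + 1)) * x + y * d (i0 + 1) :=
  stmt_6_general n k d hdd hktop hdtop hexL hexR
end
end

section
/- Let Γ = ℤ² be the free abelian group on two generators s, t, with group algebra ℝ[ℤ²]. Let d_0 ∈ M_{2×1}(ℝΓ) be the column with entries 1 − s and 1 − t, and d_1 = (1 − t, s − 1) ∈ M_{1×2}(ℝΓ) (so that d_1 d_0 = 0). Define D_0 : M_2(ℝΓ) → ℝΓ by D_0(a) = d_0* a d_0 and D_1 : ℝΓ → M_2(ℝΓ) by D_1(ξ) = d_1* ξ d_1. Then ker D_0 ≠ im D_1; specifically, the diagonal matrix a = diag((1 − t⁻¹)(1 − t), (s⁻¹ − 1)(1 − s)) ∈ M_2(ℝΓ) satisfies D_0(a) = 0 but a ∉ im D_1. -/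
/-!
All computations take place in the commutative ring `ℝ[ℤ²]`, where `d₁ d₀ = 0` and
`d₀* a d₀ = 0` are identities between Laurent polynomials. If `a = d₁* ξ d₁`, then the
off-diagonal entry `(1 - t⁻¹) ξ (s - 1)` of `a` vanishes; as `ℝ[ℤ²]` has no zero divisors
(`ℤ²` is torsion-free), `ξ = 0`, and then the nonzero diagonal entry `(1 - t⁻¹)(1 - t)`
of `a` would vanish as well.
-/

open scoped BigOperators
noncomputable section

universe u v w

/-- The group `ℤ²`, written multiplicatively. -/
abbrev Z2 : Type := Multiplicative (ℤ × ℤ)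

/-- The generator `s` of `ℤ²`. -/
def sGen : Z2 := Multiplicative.ofAdd (1, 0)

/-- The generator `t` of `ℤ²`. -/
def tGen : Z2 := Multiplicative.ofAdd (0, 1)

/-- The codifferential `d_0` for `ℤ²`: the column with entries `1 - s`, `1 - t`. -/
noncomputable def d0Z2 : Matrix (Fin 2) (Fin 1) (MonoidAlgebra ℝ Z2) :=
  Matrix.of ![![1 - MonoidAlgebra.of ℝ Z2 sGen], ![1 - MonoidAlgebra.of ℝ Z2 tGen]]

/-- The codifferential `d_1` for `ℤ²`: the row `(1 - t, s - 1)`. -/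
noncomputable def d1Z2 : Matrix (Fin 1) (Fin 2) (MonoidAlgebra ℝ Z2) :=
  Matrix.of ![![1 - MonoidAlgebra.of ℝ Z2 tGen, MonoidAlgebra.of ℝ Z2 sGen - 1]]

/-- The witness matrix `a = diag((1 - t⁻¹)(1 - t), (s⁻¹ - 1)(1 - s))`. -/
noncomputable def aZ2 : Matrix (Fin 2) (Fin 2) (MonoidAlgebra ℝ Z2) :=
  Matrix.diagonal
    ![(1 - MonoidAlgebra.of ℝ Z2 tGen⁻¹) * (1 - MonoidAlgebra.of ℝ Z2 tGen),
      (MonoidAlgebra.of ℝ Z2 sGen⁻¹ - 1) * (1 - MonoidAlgebra.of ℝ Z2 sGen)]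

open MonoidAlgebra

lemma MonoidAlgebra.one_sub_of_ne_zero {k G : Type*} [Ring k] [Nontrivial k] [Monoid G]
    {g : G} (hg : g ≠ 1) : (1 : MonoidAlgebra k G) - of k G g ≠ 0 := by
  rw [sub_ne_zero, ← map_one (of k G)]
  exact (of_injective (R := k)).ne hg.symm

section rgStar

variable {G : Type*} [Group G]

lemma rgStar_single (g : G) (r : ℝ) : rgStar (single g r) = single g⁻¹ r :=
  mapDomain_single

lemma rgStar_one : rgStar (1 : MonoidAlgebra ℝ G) = 1 := by
  rw [one_def, rgStar_single, inv_one]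

lemma rgStar_sub (x y : MonoidAlgebra ℝ G) : rgStar (x - y) = rgStar x - rgStar y := by
  rw [eq_sub_iff_add_eq, rgStar, rgStar, rgStar, ← mapDomain_add, sub_add_cancel]

end rgStar

lemma sGen_ne_one : sGen ≠ 1 := by decide

lemma tGen_ne_one : tGen ≠ 1 := by decide

lemma d1Z2_mul_d0Z2 : d1Z2 * d0Z2 = 0 := by
  ext i j : 1
  fin_cases i; fin_cases j
  simp [d1Z2, d0Z2, Matrix.mul_apply]
  ring

lemma adjM_d0Z2_mul_aZ2_mul_d0Z2 : adjM d0Z2 * aZ2 * d0Z2 = 0 := by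
  ext i j : 1
  fin_cases i; fin_cases j
  simp [d0Z2, aZ2, adjM, Matrix.mul_apply, rgStar_sub, rgStar_one, rgStar_single]
  ring

lemma adjM_d1Z2_mul_diagonal_mul_d1Z2 (ξ : MonoidAlgebra ℝ Z2) :
    adjM d1Z2 * Matrix.diagonal (fun _ : Fin 1 => ξ) * d1Z2 =
      !![(1 - of ℝ Z2 tGen⁻¹) * ξ * (1 - of ℝ Z2 tGen),
          (1 - of ℝ Z2 tGen⁻¹) * ξ * (of ℝ Z2 sGen - 1);
        (of ℝ Z2 sGen⁻¹ - 1) * ξ * (1 - of ℝ Z2 tGen),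
          (of ℝ Z2 sGen⁻¹ - 1) * ξ * (of ℝ Z2 sGen - 1)] := by
  ext i j : 1
  fin_cases i <;> fin_cases j <;>
    simp [d1Z2, adjM, Matrix.mul_apply, rgStar_sub, rgStar_one, rgStar_single]

lemma aZ2_ne_adjM_d1Z2_mul_diagonal_mul_d1Z2 (ξ : MonoidAlgebra ℝ Z2) :
    aZ2 ≠ adjM d1Z2 * Matrix.diagonal (fun _ : Fin 1 => ξ) * d1Z2 := by
  rw [adjM_d1Z2_mul_diagonal_mul_d1Z2]
  intro h
  have ht : (1 : MonoidAlgebra ℝ Z2) - of ℝ Z2 tGen ≠ 0 := one_sub_of_ne_zero tGen_ne_one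
  have ht' : (1 : MonoidAlgebra ℝ Z2) - of ℝ Z2 tGen⁻¹ ≠ 0 :=
    one_sub_of_ne_zero (inv_ne_one.mpr tGen_ne_one)
  have hs : of ℝ Z2 sGen - 1 ≠ 0 := by
    rw [← neg_sub, neg_ne_zero]
    exact one_sub_of_ne_zero sGen_ne_one
  have h01 : (1 - of ℝ Z2 tGen⁻¹) * ξ * (of ℝ Z2 sGen - 1) = 0 := (congrFun₂ h 0 1).symm
  have h00 : (1 - of ℝ Z2 tGen⁻¹) * (1 - of ℝ Z2 tGen) =
      (1 - of ℝ Z2 tGen⁻¹) * ξ * (1 - of ℝ Z2 tGen) := congrFun₂ h 0 0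
  have hξ : ξ = 0 := (mul_eq_zero.mp ((mul_eq_zero.mp h01).resolve_right hs)).resolve_left ht'
  rw [hξ, mul_zero, zero_mul] at h00
  exact mul_ne_zero ht' ht h00

/-- for `Γ = ℤ²` with the codifferentials `d_0`, `d_1` above
(`d_1 d_0 = 0`), we have `ker D_0 ≠ im D_1`; specifically the diagonal matrix
`a = diag((1-t⁻¹)(1-t), (s⁻¹-1)(1-s))` satisfies `D_0(a) = d_0* a d_0 = 0` but
`a ∉ im D_1 = {d_1* ξ d_1 : ξ ∈ ℝΓ}`. -/
theorem stmt_19 :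
    d1Z2 * d0Z2 = 0 ∧
    adjM d0Z2 * aZ2 * d0Z2 = 0 ∧
    (¬ ∃ ξ : MonoidAlgebra ℝ Z2,
      aZ2 = adjM d1Z2 * Matrix.diagonal (fun _ : Fin 1 => ξ) * d1Z2) ∧
    {x : Matrix (Fin 2) (Fin 2) (MonoidAlgebra ℝ Z2) | adjM d0Z2 * x * d0Z2 = 0} ≠
      {x : Matrix (Fin 2) (Fin 2) (MonoidAlgebra ℝ Z2) |
        ∃ ξ : MonoidAlgebra ℝ Z2,
          x = adjM d1Z2 * Matrix.diagonal (fun _ : Fin 1 => ξ) * d1Z2} := by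
  have ha_notMem := not_exists.mpr aZ2_ne_adjM_d1Z2_mul_diagonal_mul_d1Z2
  exact ⟨d1Z2_mul_d0Z2, adjM_d0Z2_mul_aZ2_mul_d0Z2, ha_notMem,
    ne_of_mem_of_not_mem' adjM_d0Z2_mul_aZ2_mul_d0Z2 ha_notMem⟩
end
end
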